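/- The minimum distance between points of distinct cosets D3 + tᵢ and D3 + tⱼ in ℝ^3 is: 1 when {i,j} differ by 2 mod 4 (opposite cosets, e.g., t₀ and t₂), and √3/2 when they differ by 1 mod 4 (adjacent cosets, e.g., t₀ and t₁). Moreover, the minimum distance within a single coset D3 + tᵢ is √2. -/

import Mathlib

/-- The D3 root lattice: integer vectors with even coordinate sum. -/
def D3 : Set (Fin 3 → ℝ) :=
  {x | ∃ a : Fin 3 → ℤ, (∀ i, x i = a i) ∧ Even (a 0 + a 1 + a 2)}

/-- The four coset representatives of `D3` in its dual `D3*`. -/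
noncomputable def t : Fin 4 → (Fin 3 → ℝ) :=
  ![![0,0,0], ![1/2,1/2,1/2], ![0,0,1], ![1/2,1/2,-(1/2)]]

/-- The coset `D3 + t j`. -/
def coset (j : Fin 4) : Set (Fin 3 → ℝ) := {v | ∃ x ∈ D3, v = x + t j}

/-- Euclidean distance in `ℝ^3`. -/
noncomputable def edist3 (u v : Fin 3 → ℝ) : ℝ := Real.sqrt (∑ i, (u i - v i)^2)

/-!
If `a ∈ D3 + tᵢ` and `b ∈ D3 + tⱼ`, then `a - b ∈ D3 + (tᵢ - tⱼ)`, and every point of that coset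
arises this way. For opposite cosets `tᵢ - tⱼ = ±e₃`, so `a - b` is an integer vector with odd
coordinate sum, hence nonzero, of squared norm at least `1`. For adjacent cosets every coordinate
of `a - b` lies in `ℤ + 1/2`, so each contributes at least `1/4`. Within one coset `a - b` is a
nonzero integer vector with even coordinate sum; since `x² ≡ x (mod 2)` its squared norm is even,
hence at least `2`. Each bound is attained by an explicit pair.
-/

open Finset

section IntegerVectors

variable {ι : Type*} [Fintype ι]

theorem even_sum_sq_iff_even_sum (n : ι → ℤ) :
    Even (∑ i, n i ^ 2) ↔ Even (∑ i, n i) := by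
  have h : Even (∑ i, n i ^ 2 - ∑ i, n i) := by
    rw [← sum_sub_distrib]
    exact even_sum _ fun i _ => by simpa [sq, mul_sub] using Int.even_mul_pred_self (n i)
  exact Int.even_sub.mp h

theorem one_le_sum_sq_of_ne_zero {n : ι → ℤ} (hn : n ≠ 0) : 1 ≤ ∑ i, n i ^ 2 := by
  obtain ⟨i, hi⟩ := Function.ne_iff.mp hn
  calc 1 ≤ n i ^ 2 := (one_le_sq_iff_one_le_abs _).mpr (Int.one_le_abs hi)
    _ ≤ ∑ j, n j ^ 2 := single_le_sum (fun j _ => sq_nonneg (n j)) (mem_univ i)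

theorem one_le_sum_sq_of_odd_sum {n : ι → ℤ} (hn : Odd (∑ i, n i)) : 1 ≤ ∑ i, n i ^ 2 :=
  one_le_sum_sq_of_ne_zero fun h => by simp [h] at hn

theorem two_le_sum_sq_of_even_sum {n : ι → ℤ} (he : Even (∑ i, n i)) (hn : n ≠ 0) :
    2 ≤ ∑ i, n i ^ 2 := by
  obtain ⟨r, hr⟩ := (even_sum_sq_iff_even_sum n).mpr he
  have := one_le_sum_sq_of_ne_zero hn
  omega

theorem card_div_four_le_sum_sq_add_half (n : ι → ℤ) :
    (Fintype.card ι : ℝ) / 4 ≤ ∑ i, ((n i : ℝ) + 1 / 2) ^ 2 := by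
  have h : ∀ i, (1 / 4 : ℝ) ≤ ((n i : ℝ) + 1 / 2) ^ 2 := fun i => by
    -- `(x + 1/2)^2 - 1/4 = x (x + 1)`, and no integer lies strictly between `-1` and `0`
    have : (0 : ℝ) ≤ n i * (n i + 1) := by
      rcases le_or_gt 0 (n i) with h | h
      · have : (0 : ℝ) ≤ n i := by exact_mod_cast h
        positivity
      · have : (n i : ℝ) ≤ -1 := by exact_mod_cast Int.le_sub_one_of_lt h
        nlinarith
    nlinarith
  calc (Fintype.card ι : ℝ) / 4 = ∑ _i : ι, (1 / 4 : ℝ) := by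
        rw [sum_const, card_univ, nsmul_eq_mul]; ring
    _ ≤ _ := sum_le_sum fun i _ => h i

end IntegerVectors

lemma mem_coset_iff {j : Fin 4} {a : Fin 3 → ℝ} :
    a ∈ coset j ↔ ∃ n : Fin 3 → ℤ, Even (∑ k, n k) ∧ ∀ k, a k = n k + t j k := by
  simp only [coset, D3, Fin.sum_univ_three, Set.mem_ofPred_eq]
  constructor
  · rintro ⟨x, ⟨n, hx, hn⟩, rfl⟩
    exact ⟨n, hn, fun k => by simp [hx k]⟩
  · rintro ⟨n, hn, ha⟩
    exact ⟨_, ⟨n, fun _ => rfl, hn⟩, funext fun k => by simp [ha k]⟩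

lemma exists_sub_eq_of_mem_coset {i j : Fin 4} {a b : Fin 3 → ℝ}
    (ha : a ∈ coset i) (hb : b ∈ coset j) :
    ∃ n : Fin 3 → ℤ, Even (∑ k, n k) ∧ ∀ k, a k - b k = n k + (t i k - t j k) := by
  obtain ⟨p, hp, hap⟩ := mem_coset_iff.mp ha
  obtain ⟨q, hq, hbq⟩ := mem_coset_iff.mp hb
  refine ⟨p - q, ?_, fun k => ?_⟩
  · simpa only [Pi.sub_apply, sum_sub_distrib] using hp.sub hq
  · rw [hap, hbq]; simp only [Pi.sub_apply, Int.cast_sub]; ring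

lemma exists_mem_coset_sub_eq (i j : Fin 4) {n : Fin 3 → ℤ} (hn : Even (∑ k, n k)) :
    ∃ a ∈ coset i, ∃ b ∈ coset j, ∀ k, a k - b k = n k + (t i k - t j k) :=
  ⟨_, mem_coset_iff.mpr ⟨n, hn, fun _ => rfl⟩,
    t j, mem_coset_iff.mpr ⟨0, by simp, fun k => by simp⟩, fun k => by ring⟩

lemma edist3_eq_sqrt_sum_sq_sub (a b : Fin 3 → ℝ) :
    edist3 a b = √(∑ k, (a k - b k) ^ 2) := rfl

lemma t_sub_t_add_two (i : Fin 4) :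
    ∃ m : Fin 3 → ℤ, ∑ k, m k ^ 2 = 1 ∧ ∀ k, t i k - t (i + 2) k = m k := by
  refine ⟨![![0, 0, -1], ![0, 0, 1], ![0, 0, 1], ![0, 0, -1]] i, by fin_cases i <;> decide,
    fun k => ?_⟩
  fin_cases i <;> fin_cases k <;> simp [t] <;> norm_num

lemma fract_t_sub_t_of_adjacent {i j : Fin 4} (hij : j = i + 1 ∨ i = j + 1) (k : Fin 3) :
    Int.fract (t i k - t j k) = 1 / 2 := by
  fin_cases i <;> fin_cases j <;> simp at hij <;> fin_cases k <;>
    norm_num [t, Matrix.cons_val, Int.fract]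

lemma exists_even_sum_sq_add_half (m : Fin 3 → ℤ) :
    ∃ n : Fin 3 → ℤ, Even (∑ k, n k) ∧ ∑ k, ((n k : ℝ) + (m k + 1 / 2)) ^ 2 = 3 / 4 := by
  by_cases hm : Even (∑ k, m k)
  · refine ⟨-m, by simpa using hm, ?_⟩
    simp; norm_num
  · refine ⟨-m - Pi.single 0 1, ?_, ?_⟩
    · have hsum : ∑ k, (-m - Pi.single 0 1 : Fin 3 → ℤ) k = -(∑ k, m k + 1) := by
        simp [sum_sub_distrib]; ring
      rw [hsum]
      exact (Int.not_even_iff_odd.mp hm).add_one.neg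
    · simp [Fin.sum_univ_three]; ring

lemma opposite_cosets (i : Fin 4) :
    (∀ a ∈ coset i, ∀ b ∈ coset (i + 2), 1 ≤ edist3 a b) ∧
      (∃ a ∈ coset i, ∃ b ∈ coset (i + 2), edist3 a b = 1) := by
  obtain ⟨m, hm, ht⟩ := t_sub_t_add_two i
  have hm_odd : Odd (∑ k, m k) := by
    rw [← Int.not_even_iff_odd, ← even_sum_sq_iff_even_sum, hm]; decide
  constructor
  · intro a ha b hb
    obtain ⟨n, hn, hab⟩ := exists_sub_eq_of_mem_coset ha hb
    have hodd : Odd (∑ k, (n + m) k) := by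
      simpa only [Pi.add_apply, sum_add_distrib] using hn.add_odd hm_odd
    rw [edist3_eq_sqrt_sum_sq_sub, Real.one_le_sqrt]
    simp only [hab, ht]
    exact_mod_cast one_le_sum_sq_of_odd_sum hodd
  · obtain ⟨a, ha, b, hb, hab⟩ := exists_mem_coset_sub_eq i (i + 2) (n := 0) (by simp)
    refine ⟨a, ha, b, hb, ?_⟩
    rw [edist3_eq_sqrt_sum_sq_sub, Real.sqrt_eq_one]
    simp only [hab, ht, Pi.zero_apply, Int.cast_zero, zero_add]
    exact_mod_cast hm

lemma adjacent_cosets {i j : Fin 4} (hij : j = i + 1 ∨ i = j + 1) :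
    (∀ a ∈ coset i, ∀ b ∈ coset j, √3 / 2 ≤ edist3 a b) ∧
      (∃ a ∈ coset i, ∃ b ∈ coset j, edist3 a b = √3 / 2) := by
  set m : Fin 3 → ℤ := fun k => ⌊t i k - t j k⌋
  have ht k : t i k - t j k = m k + 1 / 2 := by
    rw [← fract_t_sub_t_of_adjacent hij k, Int.floor_add_fract]
  have hsqrt : √3 / 2 = √(3 / 4) := by
    rw [Real.sqrt_div' 3 (by norm_num : (0 : ℝ) ≤ 4), show (4 : ℝ) = 2 ^ 2 by norm_num,
      Real.sqrt_sq (by norm_num)]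
  constructor
  · intro a ha b hb
    obtain ⟨n, -, hab⟩ := exists_sub_eq_of_mem_coset ha hb
    rw [hsqrt, edist3_eq_sqrt_sum_sq_sub]
    refine Real.sqrt_le_sqrt ?_
    simp only [hab, ht]
    simpa [add_assoc] using card_div_four_le_sum_sq_add_half (n + m)
  · obtain ⟨n, hn, hsum⟩ := exists_even_sum_sq_add_half m
    obtain ⟨a, ha, b, hb, hab⟩ := exists_mem_coset_sub_eq i j hn
    refine ⟨a, ha, b, hb, ?_⟩
    rw [edist3_eq_sqrt_sum_sq_sub, hsqrt]
    simp only [hab, ht, hsum]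

lemma same_coset (i : Fin 4) :
    (∀ a ∈ coset i, ∀ b ∈ coset i, a ≠ b → √2 ≤ edist3 a b) ∧
      (∃ a ∈ coset i, ∃ b ∈ coset i, a ≠ b ∧ edist3 a b = √2) := by
  constructor
  · intro a ha b hb hne
    obtain ⟨n, hn, hab⟩ := exists_sub_eq_of_mem_coset ha hb
    simp only [sub_self, add_zero] at hab
    have hn0 : n ≠ 0 := by
      rintro rfl
      exact hne (funext fun k => sub_eq_zero.mp (by simpa using hab k))
    rw [edist3_eq_sqrt_sum_sq_sub]
    refine Real.sqrt_le_sqrt ?_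
    simp only [hab]
    exact_mod_cast two_le_sum_sq_of_even_sum hn hn0
  · obtain ⟨a, ha, b, hb, hab⟩ := exists_mem_coset_sub_eq i i (n := ![1, 1, 0]) (by decide)
    simp only [sub_self, add_zero] at hab
    refine ⟨a, ha, b, hb, fun h => by simpa [h] using hab 0, ?_⟩
    rw [edist3_eq_sqrt_sum_sq_sub]
    simp [hab, Fin.sum_univ_three]
    norm_num

theorem stmt16 :
    (∀ i : Fin 4, (∀ a ∈ coset i, ∀ b ∈ coset (i + 2), 1 ≤ edist3 a b) ∧
      (∃ a ∈ coset i, ∃ b ∈ coset (i + 2), edist3 a b = 1)) ∧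
    (∀ i j : Fin 4, (j = i + 1 ∨ i = j + 1) →
      (∀ a ∈ coset i, ∀ b ∈ coset j, Real.sqrt 3 / 2 ≤ edist3 a b) ∧
      (∃ a ∈ coset i, ∃ b ∈ coset j, edist3 a b = Real.sqrt 3 / 2)) ∧
    (∀ i : Fin 4, (∀ a ∈ coset i, ∀ b ∈ coset i, a ≠ b → Real.sqrt 2 ≤ edist3 a b) ∧
      (∃ a ∈ coset i, ∃ b ∈ coset i, a ≠ b ∧ edist3 a b = Real.sqrt 2)) :=
  ⟨opposite_cosets, fun _ _ => adjacent_cosets, same_coset⟩
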